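/- arXiv:1909.10896 — 2 statements merged into one kernel-verified Lean document; each statement's English description precedes it below -/
import Mathlib

section
/- Let (S,+) be a countable adequate commutative partial semigroup and let ⟨x_n⟩_{n=1}^∞ be an adequate sequence in S. Then the family B = { FS(⟨x_t⟩_{t=n}^∞) ∩ σ(H) : n ∈ ℕ, H a finite nonempty subset of S } consists of nonempty sets and has the finite intersection property; that is, every intersection of finitely many members of B is nonempty. -/
namespace PS

variable {S : Type*}

/-- Left-to-right sum of a list in a partial semigroup (`none` on the empty list). -/
def listSum (P : S → S → Option S) : List S → Option S
  | [] => none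
  | [a] => some a
  | a :: b :: l => (listSum P (b :: l)).bind fun t => P a t

/-- The partial sum `∑_{t ∈ H} y t`, taken in increasing order of the indices. -/
def fsum (P : S → S → Option S) (y : ℕ → S) (H : Finset ℕ) : Option S :=
  listSum P ((H.sort (· ≤ ·)).map y)

/-- Associativity of a partial operation, in the strong (Kleene) sense. -/
def Assoc (P : S → S → Option S) : Prop :=
  ∀ a b c : S, (P a b).bind (fun t => P t c) = (P b c).bind fun t => P a t

/-- Commutativity: `a + b = b + a` whenever either side is defined. -/
def Comm (P : S → S → Option S) : Prop := ∀ a b : S, P a b = P b a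

/-- `φ(s) = {t : s + t is defined}`. -/
def phi (P : S → S → Option S) (s : S) : Set S := {t | (P s t).isSome}

/-- `σ(H) = ⋂_{s ∈ H} φ(s)`. -/
def sigma (P : S → S → Option S) (H : Finset S) : Set S :=
  {t | ∀ s ∈ H, (P s t).isSome = true}

/-- An adequate partial semigroup: `σ(H) ≠ ∅` for all finite nonempty `H`. -/
def Adequate (P : S → S → Option S) : Prop :=
  ∀ H : Finset S, H.Nonempty → (sigma P H).Nonempty

/-- `FS(⟨x_n⟩_{n=m}^∞)`. -/
def FSfrom (P : S → S → Option S) (x : ℕ → S) (m : ℕ) : Set S :=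
  {s | ∃ H : Finset ℕ, H.Nonempty ∧ (∀ n ∈ H, m ≤ n) ∧ fsum P x H = some s}

/-- `FS` of the first `m` terms of a sequence. -/
def FSfin (P : S → S → Option S) (x : ℕ → S) (m : ℕ) : Set S :=
  {s | ∃ H : Finset ℕ, H.Nonempty ∧ H ⊆ Finset.range m ∧ fsum P x H = some s}

/-- An adequate sequence. -/
def AdequateSeq (P : S → S → Option S) (x : ℕ → S) : Prop :=
  (∀ F : Finset ℕ, F.Nonempty → (fsum P x F).isSome = true) ∧
  (∀ F : Finset S, F.Nonempty → ∃ m : ℕ, FSfrom P x m ⊆ sigma P F)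

/-- `δS ⊆ βS`. -/
def deltaS (P : S → S → Option S) : Set (Ultrafilter S) :=
  {p | ∀ s : S, phi P s ∈ p}

/-- `-x + A = {y ∈ φ(x) : x + y ∈ A}`. -/
def shift (P : S → S → Option S) (x : S) (A : Set S) : Set S :=
  {y | ∃ z ∈ A, P x y = some z}

/-- `IsSum P r p q` expresses that `r = p + q` in `δS`:
`A ∈ p + q` iff `{x : -x + A ∈ q} ∈ p`. -/
def IsSum (P : S → S → Option S) (r p q : Ultrafilter S) : Prop :=
  ∀ A : Set S, A ∈ r ↔ {x : S | shift P x A ∈ q} ∈ p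

/-- A finite product subsystem `⟨y_n⟩_{n<m}` of `FS(⟨x_n⟩_{n=k}^∞)`. -/
def IsProdSubsysFin (P : S → S → Option S) (x : ℕ → S) (k m : ℕ) (y : ℕ → S) : Prop :=
  ∃ H : ℕ → Finset ℕ,
    (∀ n < m, (H n).Nonempty) ∧
    (∀ t ∈ H 0, k ≤ t) ∧
    (∀ n, n + 1 < m → ∀ s ∈ H n, ∀ t ∈ H (n + 1), s < t) ∧
    (∀ n < m, fsum P x (H n) = some (y n))

/-- An infinite product subsystem `⟨y_n⟩_{n=0}^∞` of `FS(⟨x_n⟩_{n=k}^∞)`. -/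
def IsProdSubsysInf (P : S → S → Option S) (x : ℕ → S) (k : ℕ) (y : ℕ → S) : Prop :=
  ∃ H : ℕ → Finset ℕ,
    (∀ n, (H n).Nonempty) ∧
    (∀ t ∈ H 0, k ≤ t) ∧
    (∀ n, ∀ s ∈ H n, ∀ t ∈ H (n + 1), s < t) ∧
    (∀ n, fsum P x (H n) = some (y n))

/-- `⟨x_n⟩_{n<m}` is a weak product subsystem of `⟨y_n⟩_{n=k}^∞`, witnessed by `H`. -/
def IsWPSWith (P : S → S → Option S) (y : ℕ → S) (k m : ℕ) (x : ℕ → S)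
    (H : ℕ → Finset ℕ) : Prop :=
  (∀ n < m, (H n).Nonempty) ∧
  (∀ n < m, ∀ t ∈ H n, k ≤ t) ∧
  (∀ n₁ < m, ∀ n₂ < m, n₁ ≠ n₂ → Disjoint (H n₁) (H n₂)) ∧
  (∀ n < m, fsum P y (H n) = some (x n))

/-- `⟨x_n⟩_{n<m}` is a weak product subsystem of `⟨y_n⟩_{n=k}^∞`. -/
def IsWPS (P : S → S → Option S) (y : ℕ → S) (k m : ℕ) (x : ℕ → S) : Prop :=
  ∃ H : ℕ → Finset ℕ, IsWPSWith P y k m x H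

/-- The coordinatewise partial operation on a finite product, defined exactly when
every coordinate operation is defined. -/
def prodOp {l : ℕ} {T : Fin l → Type*} (P : ∀ i, T i → T i → Option (T i)) :
    (∀ i, T i) → (∀ i, T i) → Option (∀ i, T i) := fun a b =>
  if h : ∀ i, (P i (a i) (b i)).isSome then
    some fun i => (P i (a i) (b i)).get (h i)
  else none

end PS

/-- In a countable adequate commutative partial semigroup, given an
adequate sequence `x`, the family
`B = { FS(⟨x_t⟩_{t=n}^∞) ∩ σ(H) : n ∈ ℕ, H a finite nonempty subset of S }`
consists of nonempty sets and has the finite intersection property. -/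
theorem statement0 {S : Type*} [Countable S] (P : S → S → Option S)
    (hassoc : PS.Assoc P) (hcomm : PS.Comm P) (hadeq : PS.Adequate P)
    (x : ℕ → S) (hx : PS.AdequateSeq P x) :
    (∀ (n : ℕ) (H : Finset S), H.Nonempty →
        (PS.FSfrom P x n ∩ PS.sigma P H).Nonempty) ∧
    (∀ I : Finset (ℕ × Finset S), I.Nonempty → (∀ q ∈ I, q.2.Nonempty) →
        (⋂ q ∈ I, (PS.FSfrom P x q.1 ∩ PS.sigma P q.2)).Nonempty) := by
  classical
  have mono : ∀ m n : ℕ, m ≤ n → PS.FSfrom P x n ⊆ PS.FSfrom P x m := by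
    rintro m n hmn s ⟨H, hne, hH, hs⟩
    exact ⟨H, hne, fun t ht => hmn.trans (hH t ht), hs⟩
  have mem : ∀ n : ℕ, x n ∈ PS.FSfrom P x n := by
    intro n
    refine ⟨{n}, Finset.singleton_nonempty n, ?_, ?_⟩
    · intro t ht; simp at ht; omega
    · simp [PS.fsum, PS.listSum]
  constructor
  · intro n H hne
    obtain ⟨m, hm⟩ := hx.2 H hne
    exact ⟨x (max n m), mono n _ (le_max_left n m) (mem _),
      hm (mono m _ (le_max_right n m) (mem _))⟩
  · intro I hI hne
    have h : ∀ q : ℕ × Finset S, q ∈ I → ∃ m, PS.FSfrom P x m ⊆ PS.sigma P q.2 :=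
      fun q hq => hx.2 q.2 (hne q hq)
    choose f hf using h
    set N := I.sup (fun q => q.1) ⊔ I.attach.sup (fun q => f q.1 q.2) with hN
    refine ⟨x N, ?_⟩
    simp only [Set.mem_iInter]
    intro q hq
    refine ⟨mono q.1 N (le_sup_of_le_left (Finset.le_sup hq)) (mem N), ?_⟩
    exact hf q hq (mono _ N
      (le_sup_of_le_right (Finset.le_sup (Finset.mem_attach I ⟨q, hq⟩))) (mem N))
end

section
/- Let (S,+) be a countable adequate commutative partial semigroup and let ⟨x_n⟩_{n=1}^∞ be an adequate sequence in S. Then T = ⋂_{m=1}^∞ cl(FS(⟨x_n⟩_{n=m}^∞)) ∩ δS is a nonempty compact subsemigroup of (δS,+); in particular, for all p,q ∈ T one has p+q ∈ T. -/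
/-!
The tails `FS(⟨x_n⟩_{n≥m})` form a decreasing family, and by adequacy of the sequence each `φ(s)`
contains one of them; so every ultrafilter refining the tails lies in `T`, and `T`, cut out by
closed conditions `A ∈ p`, is compact. For closure under `+`: if `a ∈ FS(⟨x_n⟩_{n≥m})` uses the
indices `H`, then every element of a tail starting past `max H` can be added to `a` inside
`FS(⟨x_n⟩_{n≥m})`, so `-a + FS(⟨x_n⟩_{n≥m})` contains a tail. Similarly, associativity gives
`φ(a) ∩ φ(s + a) ⊆ -a + φ(s)`, so `δS` is closed under `+`.
-/

namespace PS

variable {S : Type*} {P : S → S → Option S}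

lemma listSum_cons (a : S) {l : List S} (hl : l ≠ []) :
    listSum P (a :: l) = (listSum P l).bind (P a) := by
  cases l with
  | nil => exact absurd rfl hl
  | cons b m => rfl

lemma listSum_append (hassoc : Assoc P) :
    ∀ {l₁ l₂ : List S}, l₁ ≠ [] → l₂ ≠ [] →
      listSum P (l₁ ++ l₂) = (listSum P l₁).bind fun a => (listSum P l₂).bind (P a)
  | [], _, h, _ => absurd rfl h
  | [a], _, _, h₂ => by simp [listSum_cons a h₂, listSum]
  | a :: b :: l₁, l₂, _, h₂ => by
    rw [List.cons_append, listSum_cons a (by simp), listSum_append hassoc (by simp) h₂,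
      listSum_cons a (l := b :: l₁) (by simp)]
    rcases listSum P (b :: l₁) with _ | u <;> rcases listSum P l₂ with _ | v
    · rfl
    · rfl
    · simp
    · exact (hassoc a u v).symm

lemma _root_.Finset.sort_union_of_lt {α : Type*} [LinearOrder α] {s t : Finset α}
    (h : ∀ a ∈ s, ∀ b ∈ t, a < b) :
    (s ∪ t).sort (· ≤ ·) = s.sort (· ≤ ·) ++ t.sort (· ≤ ·) := by
  have hdisj : Disjoint s t :=
    Finset.disjoint_left.2 fun a has hat => lt_irrefl a (h a has a hat)
  refine List.Perm.eq_of_pairwise' (Finset.pairwise_sort _ _) ?_ ?_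
  · refine List.pairwise_append.2 ⟨Finset.pairwise_sort _ _, Finset.pairwise_sort _ _, ?_⟩
    intro a ha b hb
    exact (h a ((Finset.mem_sort _).1 ha) b ((Finset.mem_sort _).1 hb)).le
  · rw [← Multiset.coe_eq_coe, ← Multiset.coe_add, Finset.sort_eq, Finset.sort_eq,
      Finset.sort_eq, ← Finset.disjUnion_eq_union s t hdisj]
    rfl

lemma fsum_union (hassoc : Assoc P) (x : ℕ → S) {H K : Finset ℕ}
    (hH : H.Nonempty) (hK : K.Nonempty) (h : ∀ a ∈ H, ∀ b ∈ K, a < b) :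
    fsum P x (H ∪ K) = (fsum P x H).bind fun a => (fsum P x K).bind (P a) := by
  have sort_ne_nil : ∀ {L : Finset ℕ}, L.Nonempty → (L.sort (· ≤ ·)).map x ≠ [] :=
    fun ⟨a, ha⟩ => by simpa using List.ne_nil_of_mem ((Finset.mem_sort _).2 ha)
  rw [fsum, Finset.sort_union_of_lt h, List.map_append]
  exact listSum_append hassoc (sort_ne_nil hH) (sort_ne_nil hK)

lemma mem_FSfrom_self (x : ℕ → S) (n : ℕ) : x n ∈ FSfrom P x n :=
  ⟨{n}, Finset.singleton_nonempty n, by simp, by simp [fsum, listSum]⟩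

lemma FSfrom_antitone (x : ℕ → S) : Antitone (FSfrom P x) := by
  rintro m n hmn s ⟨H, hne, hge, hs⟩
  exact ⟨H, hne, fun t ht => hmn.trans (hge t ht), hs⟩

lemma shift_eq_preimage (a : S) (A : Set S) : shift P a A = P a ⁻¹' (some '' A) := by
  ext y
  simp [shift, eq_comm]

lemma exists_FSfrom_subset_shift (hassoc : Assoc P) {x : ℕ → S}
    (hx : ∀ F : Finset ℕ, F.Nonempty → (fsum P x F).isSome = true)
    {m : ℕ} {a : S} (ha : a ∈ FSfrom P x m) :
    ∃ k, FSfrom P x k ⊆ shift P a (FSfrom P x m) := by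
  obtain ⟨H, hHne, hHge, hHa⟩ := ha
  refine ⟨H.max' hHne + 1, ?_⟩
  rintro y ⟨K, hKne, hKge, hKy⟩
  have hlt : ∀ s ∈ H, ∀ t ∈ K, s < t := fun s hs t ht =>
    (H.le_max' s hs).trans_lt (hKge t ht)
  have hHK := fsum_union hassoc x hHne hKne hlt
  rw [hHa, hKy, Option.bind_some, Option.bind_some] at hHK
  have hdef : (P a y).isSome := hHK ▸ hx _ (hHne.mono Finset.subset_union_left)
  refine ⟨(P a y).get hdef, ⟨H ∪ K, hHne.mono Finset.subset_union_left, ?_, ?_⟩,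
    (Option.some_get hdef).symm⟩
  · have hm : m ≤ H.max' hHne := hHge _ (H.max'_mem hHne)
    simp only [Finset.mem_union]
    rintro t (ht | ht)
    · exact hHge t ht
    · exact hm.trans (Nat.le_succ _ |>.trans (hKge t ht))
  · rw [hHK, Option.some_get]

lemma phi_inter_phi_subset_shift (hassoc : Assoc P) {s a w : S} (hw : P s a = some w) :
    phi P a ∩ phi P w ⊆ shift P a (phi P s) := by
  rintro y ⟨hay, hwy⟩
  obtain ⟨z, hz⟩ := Option.isSome_iff_exists.1 hay
  have hassoc' := hassoc s a y
  rw [hw, hz, Option.bind_some, Option.bind_some] at hassoc'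
  exact ⟨z, show (P s z).isSome by rw [← hassoc']; exact hwy, hz⟩

lemma exists_isSum (p : Ultrafilter S) {q : Ultrafilter S} (hq : q ∈ deltaS P) :
    ∃ r, IsSum P r p q := by
  have hlarge : ∀ a, Set.range some ∈ q.map (P a) := fun a =>
    Filter.mem_of_superset (hq a) fun y hy => (Option.isSome_iff_exists.1 hy).imp fun _ h => h.symm
  refine ⟨p.bind fun a => (q.map (P a)).comap (Option.some_injective S) (hlarge a), fun A => ?_⟩
  change {a | A ∈ (q.map (P a)).comap (Option.some_injective S) (hlarge a)} ∈ p ↔ _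
  simp only [Ultrafilter.mem_comap, Ultrafilter.mem_map, shift_eq_preimage]

lemma mem_deltaS_of_isSum (hassoc : Assoc P) {p q r : Ultrafilter S}
    (hp : p ∈ deltaS P) (hq : q ∈ deltaS P) (hr : IsSum P r p q) : r ∈ deltaS P := fun s =>
  (hr (phi P s)).2 <| Filter.mem_of_superset (hp s) fun a ha =>
    Filter.mem_of_superset (Filter.inter_mem (hq a) (hq _))
      (phi_inter_phi_subset_shift hassoc (Option.some_get ha).symm)

lemma FSfrom_mem_of_isSum (hassoc : Assoc P) {x : ℕ → S}
    (hx : ∀ F : Finset ℕ, F.Nonempty → (fsum P x F).isSome = true) {p q r : Ultrafilter S}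
    (hp : ∀ m, FSfrom P x m ∈ p) (hq : ∀ m, FSfrom P x m ∈ q) (hr : IsSum P r p q) (m : ℕ) :
    FSfrom P x m ∈ r :=
  (hr _).2 <| Filter.mem_of_superset (hp m) fun _ ha =>
    have ⟨k, hk⟩ := exists_FSfrom_subset_shift hassoc hx ha
    Filter.mem_of_superset (hq k) hk

lemma exists_ultrafilter_FSfrom_mem_deltaS {x : ℕ → S} (hx : AdequateSeq P x) :
    ∃ p : Ultrafilter S, (∀ m, FSfrom P x m ∈ p) ∧ p ∈ deltaS P := by
  let F : Filter S := ⨅ m, Filter.principal (FSfrom P x m)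
  have hF : F.NeBot := Filter.iInf_neBot_of_directed'
    (Filter.monotone_principal.comp_antitone (FSfrom_antitone x)).directed_ge
    fun m => Filter.principal_neBot_iff.2 ⟨x m, mem_FSfrom_self x m⟩
  have hFS : ∀ m, FSfrom P x m ∈ F := fun m => Filter.mem_iInf_of_mem m (Filter.mem_principal_self _)
  refine ⟨Ultrafilter.of F, fun m => Ultrafilter.of_le F (hFS m), fun s => Ultrafilter.of_le F ?_⟩
  obtain ⟨m, hm⟩ := hx.2 {s} (Finset.singleton_nonempty s)
  exact Filter.mem_of_superset (hFS m) fun t ht => hm ht s (Finset.mem_singleton_self s)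

lemma isClosed_setOf_forall_mem {ι : Type*} (A : ι → Set S) :
    IsClosed {p : Ultrafilter S | ∀ i, A i ∈ p} := by
  simpa only [Set.ofPred_forall] using isClosed_iInter fun i => ultrafilter_isClosed_basic (A i)

end PS

open PS

theorem statement1_general {S : Type*} (P : S → S → Option S)
    (hassoc : PS.Assoc P)
    (x : ℕ → S) (hx : PS.AdequateSeq P x)
    (T : Set (Ultrafilter S))
    (hT : T = {p : Ultrafilter S | (∀ m : ℕ, PS.FSfrom P x m ∈ p) ∧ p ∈ PS.deltaS P}) :
    T.Nonempty ∧ IsCompact T ∧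
      ∀ p ∈ T, ∀ q ∈ T,
        (∃ r : Ultrafilter S, PS.IsSum P r p q) ∧
        (∀ r : Ultrafilter S, PS.IsSum P r p q → r ∈ T) := by
  subst hT
  refine ⟨exists_ultrafilter_FSfrom_mem_deltaS hx, ?_, ?_⟩
  · exact ((isClosed_setOf_forall_mem (FSfrom P x)).inter
      (isClosed_setOf_forall_mem (phi P))).isCompact
  · rintro p ⟨hpFS, hpδ⟩ q ⟨hqFS, hqδ⟩
    exact ⟨exists_isSum p hqδ, fun r hr =>
      ⟨FSfrom_mem_of_isSum hassoc hx.1 hpFS hqFS hr, mem_deltaS_of_isSum hassoc hpδ hqδ hr⟩⟩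

/-- `T = ⋂_m cl(FS(⟨x_n⟩_{n=m}^∞)) ∩ δS` is a nonempty compact
subsemigroup of `(δS, +)`; in particular for `p, q ∈ T` the sum `p + q` exists and
lies in `T`. -/
theorem statement1 {S : Type*} [Countable S] (P : S → S → Option S)
    (hassoc : PS.Assoc P) (hcomm : PS.Comm P) (hadeq : PS.Adequate P)
    (x : ℕ → S) (hx : PS.AdequateSeq P x)
    (T : Set (Ultrafilter S))
    (hT : T = {p : Ultrafilter S | (∀ m : ℕ, PS.FSfrom P x m ∈ p) ∧ p ∈ PS.deltaS P}) :
    T.Nonempty ∧ IsCompact T ∧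
      ∀ p ∈ T, ∀ q ∈ T,
        (∃ r : Ultrafilter S, PS.IsSum P r p q) ∧
        (∀ r : Ultrafilter S, PS.IsSum P r p q → r ∈ T) :=
  statement1_general P hassoc x hx T hT
end
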